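/- Let f : [a,b] → ℝ be a function of bounded variation on [a,b]. Then for every x ∈ [a,b], |∫_a^b f(t) dt − [(x−a)·f(a) + (b−x)·f(b)]| ≤ [ (1/2)(b−a) + |x − (a+b)/2| ] · V_a^b(f), where V_a^b(f) denotes the total variation of f on [a,b]. -/
import Mathlib

open MeasureTheory Set intervalIntegral

/-- **Generalised trapezoid inequality for functions of bounded variation.**
If `f : [a,b] → ℝ` has bounded variation on `[a,b]`, then for every `x ∈ [a,b]`,
`|∫_a^b f − ((x−a)f(a) + (b−x)f(b))| ≤ ((b−a)/2 + |x − (a+b)/2|) ⬝ V_a^b(f)`. -/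
theorem generalised_trapezoid_bounded_variation
    (a b : ℝ) (hab : a < b) (f : ℝ → ℝ)
    (hf : BoundedVariationOn f (Set.Icc a b))
    (x : ℝ) (hx : x ∈ Set.Icc a b) :
    |(∫ t in a..b, f t) - ((x - a) * f a + (b - x) * f b)| ≤
      ((1 / 2) * (b - a) + |x - (a + b) / 2|) * (eVariationOn f (Set.Icc a b)).toReal := by
  obtain ⟨hax, hxb⟩ := hx
  obtain ⟨p, q, hp, hq, hpq⟩ := hf.locallyBoundedVariationOn.exists_monotoneOn_sub_monotoneOn
  -- integrability on subintervals of [a,b]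
  have hint : ∀ c d : ℝ, c ∈ Set.Icc a b → d ∈ Set.Icc a b → c ≤ d →
      IntervalIntegrable f volume c d := by
    intro c d hc hd hcd
    have hsub : Set.uIcc c d ⊆ Set.Icc a b := by
      rw [Set.uIcc_of_le hcd]; exact Set.Icc_subset_Icc hc.1 hd.2
    have h1 := (hp.mono hsub).intervalIntegrable (μ := volume)
    have h2 := (hq.mono hsub).intervalIntegrable (μ := volume)
    rw [hpq]; exact h1.sub h2
  have hxmem : x ∈ Set.Icc a b := ⟨hax, hxb⟩
  have hamem : a ∈ Set.Icc a b := ⟨le_rfl, hab.le⟩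
  have hbmem : b ∈ Set.Icc a b := ⟨hab.le, le_rfl⟩
  have hiax : IntervalIntegrable f volume a x := hint a x hamem hxmem hax
  have hixb : IntervalIntegrable f volume x b := hint x b hxmem hbmem hxb
  -- variations
  have hf1 : BoundedVariationOn f (Set.Icc a x) :=
    hf.mono (Set.Icc_subset_Icc_right hxb)
  have hf2 : BoundedVariationOn f (Set.Icc x b) :=
    hf.mono (Set.Icc_subset_Icc_left hax)
  set V1 := (eVariationOn f (Set.Icc a x)).toReal with hV1
  set V2 := (eVariationOn f (Set.Icc x b)).toReal with hV2
  set V := (eVariationOn f (Set.Icc a b)).toReal with hV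
  have hVsum : V1 + V2 = V := by
    have h := eVariationOn.Icc_add_Icc f (s := Set.Icc a b) hax hxb hxmem
    rw [Set.inter_eq_self_of_subset_right (Set.Icc_subset_Icc_right hxb),
      Set.inter_eq_self_of_subset_right (Set.Icc_subset_Icc_left hax),
      Set.inter_eq_self_of_subset_right (subset_refl _)] at h
    rw [hV1, hV2, hV, ← h, ENNReal.toReal_add hf1 hf2]
  have hV1n : 0 ≤ V1 := ENNReal.toReal_nonneg
  have hV2n : 0 ≤ V2 := ENNReal.toReal_nonneg
  -- bounds on the two pieces
  have b1 : |∫ t in a..x, (f t - f a)| ≤ (x - a) * V1 := by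
    have := intervalIntegral.norm_integral_le_of_norm_le_const
      (C := V1) (f := fun t => f t - f a) (a := a) (b := x) ?_
    · rw [Real.norm_eq_abs] at this
      calc |∫ t in a..x, (f t - f a)| ≤ V1 * |x - a| := this
        _ = (x - a) * V1 := by rw [abs_of_nonneg (by linarith)]; ring
    · intro t ht
      rw [Set.uIoc_of_le hax] at ht
      have htm : t ∈ Set.Icc a x := ⟨ht.1.le, ht.2⟩
      have := hf1.dist_le htm (Set.left_mem_Icc.2 hax)
      rwa [Real.dist_eq] at this
  have b2 : |∫ t in x..b, (f t - f b)| ≤ (b - x) * V2 := by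
    have := intervalIntegral.norm_integral_le_of_norm_le_const
      (C := V2) (f := fun t => f t - f b) (a := x) (b := b) ?_
    · rw [Real.norm_eq_abs] at this
      calc |∫ t in x..b, (f t - f b)| ≤ V2 * |b - x| := this
        _ = (b - x) * V2 := by rw [abs_of_nonneg (by linarith)]; ring
    · intro t ht
      rw [Set.uIoc_of_le hxb] at ht
      have htm : t ∈ Set.Icc x b := ⟨ht.1.le, ht.2⟩
      have := hf2.dist_le htm (Set.right_mem_Icc.2 hxb)
      rwa [Real.dist_eq] at this
  -- decomposition
  have e1 : (∫ t in a..x, (f t - f a)) = (∫ t in a..x, f t) - (x - a) * f a := by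
    rw [intervalIntegral.integral_sub hiax intervalIntegrable_const,
      intervalIntegral.integral_const, smul_eq_mul]
  have e2 : (∫ t in x..b, (f t - f b)) = (∫ t in x..b, f t) - (b - x) * f b := by
    rw [intervalIntegral.integral_sub hixb intervalIntegrable_const,
      intervalIntegral.integral_const, smul_eq_mul]
  have e3 : (∫ t in a..x, f t) + (∫ t in x..b, f t) = ∫ t in a..b, f t :=
    intervalIntegral.integral_add_adjacent_intervals hiax hixb
  have key : (∫ t in a..b, f t) - ((x - a) * f a + (b - x) * f b) =
      (∫ t in a..x, (f t - f a)) + (∫ t in x..b, (f t - f b)) := by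
    rw [e1, e2]; linarith
  -- max bound
  set M := (1 / 2 : ℝ) * (b - a) + |x - (a + b) / 2| with hM
  have hm1 : x - a ≤ M := by
    have := le_abs_self (x - (a + b) / 2); rw [hM]; linarith
  have hm2 : b - x ≤ M := by
    have := neg_le_abs (x - (a + b) / 2); rw [hM]; linarith
  calc |(∫ t in a..b, f t) - ((x - a) * f a + (b - x) * f b)|
      = |(∫ t in a..x, (f t - f a)) + (∫ t in x..b, (f t - f b))| := by rw [key]
    _ ≤ |∫ t in a..x, (f t - f a)| + |∫ t in x..b, (f t - f b)| := abs_add_le _ _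
    _ ≤ (x - a) * V1 + (b - x) * V2 := add_le_add b1 b2
    _ ≤ M * V1 + M * V2 := add_le_add
        (mul_le_mul_of_nonneg_right hm1 hV1n) (mul_le_mul_of_nonneg_right hm2 hV2n)
    _ = M * (V1 + V2) := by ring
    _ = M * V := by rw [hVsum]
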